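/- Let γ ∈ (1,2). Then for every β ∈ ℝ: (1−γ/2)·(1/(2π)) ∫₀^{2π} [sin(β−η) · sin(η) / (4 sin²(η/2))^{γ/2}] dη = (1/(2π)) ∫₀^{2π} [(cos(β) − cos(β−η)) · cos(η) / (4 sin²(η/2))^{γ/2}] dη, and (1−γ/2)·(1/(2π)) ∫₀^{2π} [cos(β−η) · sin(η) / (4 sin²(η/2))^{γ/2}] dη = −(1/(2π)) ∫₀^{2π} [(sin(β) − sin(β−η)) · cos(η) / (4 sin²(η/2))^{γ/2}] dη. -/

import Mathlib

/-!
Expanding `sin (β - η)` and `cos (β - η)` reduces both identities to three integrals against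
the kernel `D η = (4 sin² (η/2))^(γ/2) = (2 sin (η/2))^γ`. The integral of `sin η cos η / D`
vanishes because the integrand is odd about `η = π`. The other two are tied together by
`(1 - γ/2) ∫ sin² η / D = -∫ (1 - cos η) cos η / D`, the fundamental theorem of calculus for
`sin η · (2 sin (η/2))^(2-γ)`, which vanishes at `0` and `2π`. Every integrand is dominated by
`(2 sin (η/2))^(1-γ)`, integrable because `γ < 2`.
-/

open Real Set MeasureTheory intervalIntegral

theorem integral_eq_zero_of_apply_add_sub_eq_neg {f : ℝ → ℝ} {a b : ℝ}
    (hf : ∀ x, f (a + b - x) = -f x) : ∫ x in a..b, f x = 0 := by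
  have h : ∫ x in a..b, f (a + b - x) = ∫ x in a..b, f x := by
    simp [integral_comp_sub_left f (a + b) (a := a) (b := b)]
  simp only [hf, intervalIntegral.integral_neg] at h
  linarith

theorem integral_eq_mul_add_mul {f u v : ℝ → ℝ} {a b c d : ℝ}
    (hu : IntervalIntegrable u volume a b) (hv : IntervalIntegrable v volume a b)
    (h : ∀ x, f x = c * u x + d * v x) :
    ∫ x in a..b, f x = c * (∫ x in a..b, u x) + d * ∫ x in a..b, v x := by
  simp only [h]
  rw [integral_add (hu.const_mul c) (hv.const_mul d), intervalIntegral.integral_const_mul,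
    intervalIntegral.integral_const_mul]

theorem sin_half_two_pi_sub (η : ℝ) : sin ((2 * π - η) / 2) = sin (η / 2) := by
  rw [show (2 * π - η) / 2 = π - η / 2 by ring, sin_pi_sub]

theorem sin_half_pos {η : ℝ} (hη : η ∈ Ioo 0 (2 * π)) : 0 < sin (η / 2) :=
  sin_pos_of_pos_of_lt_pi (by linarith [hη.1]) (by linarith [hη.2])

theorem abs_sin_le_two_mul_abs_sin_half (η : ℝ) : |sin η| ≤ 2 * |sin (η / 2)| := by
  rw [show η = 2 * (η / 2) by ring, sin_two_mul, mul_div_cancel_left₀ _ two_ne_zero, abs_mul,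
    abs_mul, abs_two]
  nlinarith [abs_cos_le_one (η / 2), abs_nonneg (sin (η / 2))]

theorem four_mul_sin_half_sq_rpow (γ : ℝ) {η : ℝ} (hs : 0 ≤ sin (η / 2)) :
    (4 * sin (η / 2) ^ 2) ^ (γ / 2) = (2 * sin (η / 2)) ^ γ := by
  rw [show 4 * sin (η / 2) ^ 2 = (2 * sin (η / 2)) ^ (2 : ℝ) by rw [rpow_two]; ring,
    ← rpow_mul (by linarith)]
  ring_nf

theorem intervalIntegrable_two_mul_sin_half_rpow {s : ℝ} (hs : -1 < s) :
    IntervalIntegrable (fun η => (2 * sin (η / 2)) ^ s) volume 0 (2 * π) := by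
  rcases le_or_gt 0 s with hs0 | hs0
  · exact (Continuous.rpow_const (by fun_prop) fun _ => Or.inr hs0).intervalIntegrable _ _
  have hleft : IntervalIntegrable (fun η => (2 * sin (η / 2)) ^ s) volume 0 π := by
    refine ((intervalIntegrable_rpow' hs).const_mul ((2 / π) ^ s)).mono_fun
      (by fun_prop : Measurable _).aestronglyMeasurable ?_
    rw [uIoc_of_le pi_pos.le]
    refine (ae_restrict_iff' measurableSet_Ioc).2 (Filter.Eventually.of_forall ?_)
    rintro η ⟨hη0, hηπ⟩
    dsimp only
    -- Jordan's inequality `2x/π ≤ sin x` on `[0, π/2]`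
    have hjordan : 2 / π * η ≤ 2 * sin (η / 2) := by
      have := mul_le_sin (x := η / 2) (by linarith) (by linarith)
      linarith
    have hpos : 0 < 2 / π * η := by have := pi_pos; positivity
    rw [norm_of_nonneg (rpow_nonneg (hpos.le.trans hjordan) _), ← mul_rpow (by positivity) hη0.le]
    exact (rpow_le_rpow_of_nonpos hpos hjordan hs0.le).trans (le_norm_self _)
  have hright : IntervalIntegrable (fun η => (2 * sin (η / 2)) ^ s) volume π (2 * π) := by
    have h := (hleft.comp_sub_left (2 * π)).symm
    simp only [sin_half_two_pi_sub, sub_zero, show 2 * π - π = π by ring] at h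
    exact h
  exact hleft.trans hright

theorem intervalIntegrable_div_four_mul_sin_half_sq_rpow {γ : ℝ} (hγ : γ < 2) {g : ℝ → ℝ}
    (hg : Continuous g) (hbound : ∀ η, |g η| ≤ 2 * |sin (η / 2)|) :
    IntervalIntegrable (fun η => g η / (4 * sin (η / 2) ^ 2) ^ (γ / 2)) volume 0 (2 * π) := by
  refine (intervalIntegrable_two_mul_sin_half_rpow (s := 1 - γ) (by linarith)).mono_fun
    (by fun_prop : Measurable _).aestronglyMeasurable ?_
  rw [uIoc_of_le (by positivity), ← Measure.restrict_congr_set Ioo_ae_eq_Ioc]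
  refine (ae_restrict_iff' measurableSet_Ioo).2 (Filter.Eventually.of_forall ?_)
  intro η hη
  dsimp only
  have hs := sin_half_pos hη
  have hr : 0 < 2 * sin (η / 2) := by linarith
  rw [four_mul_sin_half_sq_rpow γ hs.le, norm_div, norm_of_nonneg (rpow_pos_of_pos hr γ).le,
    norm_of_nonneg (rpow_pos_of_pos hr _).le, rpow_sub hr, rpow_one]
  gcongr
  simpa [abs_of_pos hs] using hbound η

theorem intervalIntegrable_sin_mul_cos_div {γ : ℝ} (hγ : γ < 2) :
    IntervalIntegrable (fun η => sin η * cos η / (4 * sin (η / 2) ^ 2) ^ (γ / 2))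
      volume 0 (2 * π) :=
  intervalIntegrable_div_four_mul_sin_half_sq_rpow hγ (by fun_prop) fun η => by
    rw [abs_mul]
    nlinarith [abs_cos_le_one η, abs_nonneg (sin η), abs_sin_le_two_mul_abs_sin_half η]

theorem intervalIntegrable_sin_sq_div {γ : ℝ} (hγ : γ < 2) :
    IntervalIntegrable (fun η => sin η ^ 2 / (4 * sin (η / 2) ^ 2) ^ (γ / 2))
      volume 0 (2 * π) :=
  intervalIntegrable_div_four_mul_sin_half_sq_rpow hγ (by fun_prop) fun η => by
    rw [abs_pow]
    nlinarith [abs_sin_le_one η, abs_nonneg (sin η), abs_sin_le_two_mul_abs_sin_half η]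

theorem intervalIntegrable_one_sub_cos_mul_cos_div {γ : ℝ} (hγ : γ < 2) :
    IntervalIntegrable (fun η => (1 - cos η) * cos η / (4 * sin (η / 2) ^ 2) ^ (γ / 2))
      volume 0 (2 * π) :=
  intervalIntegrable_div_four_mul_sin_half_sq_rpow hγ (by fun_prop) fun η => by
    have hhalf : 1 - cos η = 2 * |sin (η / 2)| ^ 2 := by
      rw [sq_abs, show η = 2 * (η / 2) by ring, cos_two_mul, cos_sq',
        mul_div_cancel_left₀ _ two_ne_zero]
      ring
    rw [abs_mul, abs_of_nonneg (by linarith [cos_le_one η]), hhalf]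
    nlinarith [abs_cos_le_one η, abs_nonneg (sin (η / 2)), abs_sin_le_one (η / 2),
      mul_nonneg (abs_nonneg (sin (η / 2))) (abs_nonneg (sin (η / 2)))]

theorem integral_sin_mul_cos_div_eq_zero (γ : ℝ) :
    ∫ η in (0 : ℝ)..(2 * π), sin η * cos η / (4 * sin (η / 2) ^ 2) ^ (γ / 2) = 0 :=
  integral_eq_zero_of_apply_add_sub_eq_neg fun η => by
    rw [zero_add, sin_two_pi_sub, cos_two_pi_sub, sin_half_two_pi_sub, neg_mul, neg_div]

theorem one_sub_half_mul_integral_sin_sq_div (γ : ℝ) (hγ : γ < 2) :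
    (1 - γ / 2) * ∫ η in (0 : ℝ)..(2 * π), sin η ^ 2 / (4 * sin (η / 2) ^ 2) ^ (γ / 2) =
      -∫ η in (0 : ℝ)..(2 * π), (1 - cos η) * cos η / (4 * sin (η / 2) ^ 2) ^ (γ / 2) := by
  have hQ := intervalIntegrable_sin_sq_div hγ
  have hT := intervalIntegrable_one_sub_cos_mul_cos_div hγ
  have hderiv : ∀ η ∈ Ioo 0 (2 * π), HasDerivAt (fun η => sin η * (2 * sin (η / 2)) ^ (2 - γ))
      (2 * ((1 - cos η) * cos η / (4 * sin (η / 2) ^ 2) ^ (γ / 2)) +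
        (2 - γ) * (sin η ^ 2 / (4 * sin (η / 2) ^ 2) ^ (γ / 2))) η := by
    intro η hη
    have hr : 0 < 2 * sin (η / 2) := by linarith [sin_half_pos hη]
    have hchord : HasDerivAt (fun η => 2 * sin (η / 2)) (cos (η / 2)) η :=
      (((hasDerivAt_id η).div_const 2).sin.const_mul 2).congr_deriv (by simp only [id]; ring)
    refine ((hasDerivAt_sin η).mul (hchord.rpow_const (p := 2 - γ) (Or.inl hr.ne'))).congr_deriv ?_
    rw [four_mul_sin_half_sq_rpow γ (sin_half_pos hη).le, show 2 - γ - 1 = 1 - γ by ring,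
      rpow_sub hr, rpow_sub hr, rpow_one, rpow_two]
    have hD := (rpow_pos_of_pos hr γ).ne'
    obtain ⟨θ, rfl⟩ : ∃ θ, η = 2 * θ := ⟨η / 2, by ring⟩
    rw [mul_div_cancel_left₀ θ two_ne_zero, sin_two_mul, cos_two_mul, cos_sq']
    field_simp
    ring
  have hcont : Continuous fun η => sin η * (2 * sin (η / 2)) ^ (2 - γ) :=
    continuous_sin.mul (Continuous.rpow_const (by fun_prop) fun _ => Or.inr (by linarith))
  have hFTC := integral_eq_sub_of_hasDerivAt_of_le (by positivity) hcont.continuousOn hderiv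
    ((hT.const_mul 2).add (hQ.const_mul (2 - γ)))
  rw [integral_add (hT.const_mul 2) (hQ.const_mul (2 - γ)), intervalIntegral.integral_const_mul,
    intervalIntegral.integral_const_mul] at hFTC
  simp only [sin_zero, sin_two_pi, zero_mul, sub_zero] at hFTC
  linear_combination hFTC / 2

theorem first_mode_annihilated_general (γ : ℝ) (h2 : γ < 2) :
    ∀ β : ℝ,
      ((1 - γ / 2) *
          ((1 / (2 * Real.pi)) *
            ∫ η in (0 : ℝ)..(2 * Real.pi),
              Real.sin (β - η) * Real.sin η /
                (4 * Real.sin (η / 2) ^ 2) ^ (γ / 2)) =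
        (1 / (2 * Real.pi)) *
          ∫ η in (0 : ℝ)..(2 * Real.pi),
            (Real.cos β - Real.cos (β - η)) * Real.cos η /
              (4 * Real.sin (η / 2) ^ 2) ^ (γ / 2)) ∧
      ((1 - γ / 2) *
          ((1 / (2 * Real.pi)) *
            ∫ η in (0 : ℝ)..(2 * Real.pi),
              Real.cos (β - η) * Real.sin η /
                (4 * Real.sin (η / 2) ^ 2) ^ (γ / 2)) =
        -((1 / (2 * Real.pi)) *
          ∫ η in (0 : ℝ)..(2 * Real.pi),
            (Real.sin β - Real.sin (β - η)) * Real.cos η /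
              (4 * Real.sin (η / 2) ^ 2) ^ (γ / 2))) := by
  intro β
  have hS := intervalIntegrable_sin_mul_cos_div h2
  have hQ := intervalIntegrable_sin_sq_div h2
  have hT := intervalIntegrable_one_sub_cos_mul_cos_div h2
  have hsin_sub := integral_eq_mul_add_mul hS hQ (c := sin β) (d := -cos β)
    (f := fun η => sin (β - η) * sin η / (4 * sin (η / 2) ^ 2) ^ (γ / 2))
    fun η => by rw [sin_sub]; ring
  have hcos_sub := integral_eq_mul_add_mul hS hQ (c := cos β) (d := sin β)
    (f := fun η => cos (β - η) * sin η / (4 * sin (η / 2) ^ 2) ^ (γ / 2))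
    fun η => by rw [cos_sub]; ring
  have hcos_diff := integral_eq_mul_add_mul hT hS (c := cos β) (d := -sin β)
    (f := fun η => (cos β - cos (β - η)) * cos η / (4 * sin (η / 2) ^ 2) ^ (γ / 2))
    fun η => by rw [cos_sub]; ring
  have hsin_diff := integral_eq_mul_add_mul hT hS (c := sin β) (d := cos β)
    (f := fun η => (sin β - sin (β - η)) * cos η / (4 * sin (η / 2) ^ 2) ^ (γ / 2))
    fun η => by rw [sin_sub]; ring
  rw [hsin_sub, hcos_sub, hcos_diff, hsin_diff, integral_sin_mul_cos_div_eq_zero]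
  have hparts := one_sub_half_mul_integral_sin_sq_div γ h2
  constructor
  · linear_combination (-cos β / (2 * π)) * hparts
  · linear_combination (sin β / (2 * π)) * hparts

/-- The linearization at ε = 0 of the contour-dynamics functional annihilates
the first Fourier modes `sin β` and `cos β` (the eigenvalue σ₁ vanishes):
for `γ ∈ (1,2)` and every `β ∈ ℝ`,
`(1−γ/2)·⨍ sin(β−η)·sin η/(4sin²(η/2))^{γ/2} dη
    = ⨍ (cos β − cos(β−η))·cos η/(4sin²(η/2))^{γ/2} dη` and
`(1−γ/2)·⨍ cos(β−η)·sin η/(4sin²(η/2))^{γ/2} dη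
    = −⨍ (sin β − sin(β−η))·cos η/(4sin²(η/2))^{γ/2} dη`. -/
theorem first_mode_annihilated (γ : ℝ) (h1 : 1 < γ) (h2 : γ < 2) :
    ∀ β : ℝ,
      ((1 - γ / 2) *
          ((1 / (2 * Real.pi)) *
            ∫ η in (0 : ℝ)..(2 * Real.pi),
              Real.sin (β - η) * Real.sin η /
                (4 * Real.sin (η / 2) ^ 2) ^ (γ / 2)) =
        (1 / (2 * Real.pi)) *
          ∫ η in (0 : ℝ)..(2 * Real.pi),
            (Real.cos β - Real.cos (β - η)) * Real.cos η /
              (4 * Real.sin (η / 2) ^ 2) ^ (γ / 2)) ∧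
      ((1 - γ / 2) *
          ((1 / (2 * Real.pi)) *
            ∫ η in (0 : ℝ)..(2 * Real.pi),
              Real.cos (β - η) * Real.sin η /
                (4 * Real.sin (η / 2) ^ 2) ^ (γ / 2)) =
        -((1 / (2 * Real.pi)) *
          ∫ η in (0 : ℝ)..(2 * Real.pi),
            (Real.sin β - Real.sin (β - η)) * Real.cos η /
              (4 * Real.sin (η / 2) ^ 2) ^ (γ / 2))) :=
  first_mode_annihilated_general γ h2
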